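/- arXiv:2111.13103 — 6 statements merged into one kernel-verified Lean document; each statement's English description precedes it below -/
import Mathlib

section
/- Let f : ℝⁿ → ℝ be differentiable, let x, d ∈ ℝⁿ, let B be a symmetric n×n real matrix with operator norm ‖B‖ ≤ c_B, and let γ > 0, α > 0, σ ≥ 0. Assume (i) the Taylor-type upper bound f(x+d) ≤ f(x) + ∇f(x)ᵀd + (γ/2)‖d‖², (ii) the regularized model-decrease condition ∇f(x)ᵀd + (1/2)dᵀBd + (σ/2)‖d‖² ≤ 0, and (iii) σ ≥ γ + c_B + 2α. Then the sufficient-descent inequality f(x+d) ≤ f(x) − α‖d‖² holds. -/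
open RealInnerProductSpace

/-- Single-step sufficient-descent estimate underlying Lemma 4.1:
if the regularized quadratic model value at the step `d` is nonpositive and
`σ ≥ γ + c_B + 2α`, then `f (x + d) ≤ f x - α‖d‖²`. -/
theorem bcd_single_step_descent {n : ℕ}
    (f : EuclideanSpace ℝ (Fin n) → ℝ) (hf : Differentiable ℝ f)
    (x d : EuclideanSpace ℝ (Fin n))
    (B : EuclideanSpace ℝ (Fin n) →L[ℝ] EuclideanSpace ℝ (Fin n))
    (hBsym : IsSelfAdjoint B) (c_B : ℝ) (hBnorm : ‖B‖ ≤ c_B)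
    (γ α σ : ℝ) (hγ : 0 < γ) (hα : 0 < α) (hσ0 : 0 ≤ σ)
    (hTaylor : f (x + d) ≤ f x + ⟪gradient f x, d⟫ + γ / 2 * ‖d‖ ^ 2)
    (hModel : ⟪gradient f x, d⟫ + 1 / 2 * ⟪d, B d⟫ + σ / 2 * ‖d‖ ^ 2 ≤ 0)
    (hσ : γ + c_B + 2 * α ≤ σ) :
    f (x + d) ≤ f x - α * ‖d‖ ^ 2 := by
  have hB : |⟪d, B d⟫| ≤ c_B * ‖d‖ ^ 2 := by
    calc |⟪d, B d⟫| ≤ ‖d‖ * ‖B d‖ := abs_real_inner_le_norm _ _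
      _ ≤ ‖d‖ * (‖B‖ * ‖d‖) := by
          exact mul_le_mul_of_nonneg_left (B.le_opNorm d) (norm_nonneg d)
      _ ≤ ‖d‖ * (c_B * ‖d‖) := by
          have : ‖B‖ * ‖d‖ ≤ c_B * ‖d‖ :=
            mul_le_mul_of_nonneg_right hBnorm (norm_nonneg d)
          exact mul_le_mul_of_nonneg_left this (norm_nonneg d)
      _ = c_B * ‖d‖ ^ 2 := by ring
  have h1 : -(c_B * ‖d‖ ^ 2) ≤ ⟪d, B d⟫ := neg_le_of_abs_le hB
  have hd : (0:ℝ) ≤ ‖d‖ ^ 2 := by positivity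
  nlinarith [mul_le_mul_of_nonneg_right hσ hd]
end

section
/- Under the BCD setting and Assumptions stated in the context, define, for each block i ∈ {1,…,p} and each iteration k > m, o(i,k) := j_{k̂}, where k̂ is the largest iteration index with k̂ < k and i_{k̂} = i. Then for every i ∈ {1,…,p} and every k > m: (a) x_i^k ∈ A_{i,o(i,k)}; (b) the multipliers μ_{i,o(i,k),ℓ} := μ_ℓ^{k̂} ≥ 0 satisfy min{μ_{i,o(i,k),ℓ}, −g_{i,o(i,k),ℓ}(x_i^k)} ≤ δ for all ℓ = 1,…,n_g(i,o(i,k)); and (c) lim_{k→∞} ‖∇_i f(x^k) + Σ_{ℓ=1}^{n_g(i,o(i,k))} μ_{i,o(i,k),ℓ} ∇g_{i,o(i,k),ℓ}(x_i^k)‖ = 0. -/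
/-!
The sufficient-decrease test makes the step lengths `‖x^{k+1} - x^k‖` square-summable, since
`f(x^k)` is bounded below; so they tend to zero, and so does every sum of `m` consecutive step
lengths. At an iteration `k > m`, block `i` was last updated at some `k̂ ∈ [k - m, k)` and has not
moved since. The subproblem solved at `k̂` makes the KKT residual at `x^{k̂+1}` at most `c₄` times
the step length `‖d_{k̂}‖`, and the Lipschitz bounds on the partial gradients let the residual drift
between `k̂ + 1` and `k` by at most `γ` times the intervening step lengths. Hence the residual at `x^k`
is at most `c₄` times the window sum of the last `m` step lengths, which tends to zero.
-/

open Filter Topology RealInnerProductSpace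

theorem tendsto_zero_of_sufficient_decrease {u D : ℕ → ℝ} {α b : ℝ} (hα : 0 < α)
    (hD : ∀ k, 0 ≤ D k) (hdecr : ∀ k, u (k + 1) ≤ u k - α * D k ^ 2) (hb : ∀ k, b ≤ u k) :
    Tendsto D atTop (𝓝 0) := by
  have hsum : Summable fun k => D k ^ 2 := by
    refine summable_of_sum_range_le (c := (u 0 - b) / α) (fun k => sq_nonneg _) fun n => ?_
    rw [le_div_iff₀ hα, Finset.sum_mul]
    calc ∑ k ∈ Finset.range n, D k ^ 2 * α
        ≤ ∑ k ∈ Finset.range n, (u k - u (k + 1)) :=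
          Finset.sum_le_sum fun k _ => by linarith [hdecr k]
      _ = u 0 - u n := Finset.sum_range_sub' u n
      _ ≤ u 0 - b := by linarith [hb n]
  simpa [Real.sqrt_sq (hD _)] using hsum.tendsto_atTop_zero.sqrt

theorem tendsto_sum_Ico_sub_of_tendsto {M : Type*} [AddCommMonoid M] [TopologicalSpace M]
    [ContinuousAdd M] {D : ℕ → M} (hD : Tendsto D atTop (𝓝 0)) (m : ℕ) :
    Tendsto (fun k => ∑ t ∈ Finset.Ico (k - m) k, D t) atTop (𝓝 0) := by
  have hshift : Tendsto (fun k => ∑ j ∈ Finset.range m, D (k - m + j)) atTop (𝓝 0) := by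
    simpa using tendsto_finsetSum (Finset.range m) fun j _ =>
      hD.comp (tendsto_atTop_mono (fun k => Nat.le_add_right _ j) (tendsto_sub_atTop_nat m))
  refine hshift.congr' ?_
  filter_upwards [eventually_ge_atTop m] with k hk
  rw [Finset.sum_Ico_eq_sum_range, Nat.sub_sub_self hk]

theorem norm_add_le_of_step {E : Type*} [NormedAddCommGroup E] [NormedSpace ℝ E]
    {G₀ G₁ S d : E} {B : E →L[ℝ] E} {σ θ γ cB σmax : ℝ}
    (hstep : ‖G₀ + B d + σ • d + S‖ ≤ θ * ‖d‖ ∨ G₁ + S = 0)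
    (hlip : ‖G₀ - G₁‖ ≤ γ * ‖d‖) (hB : ‖B‖ ≤ cB) (hσ₀ : 0 ≤ σ) (hσ : σ ≤ σmax)
    (hθ : 0 ≤ θ) (hγ : 0 ≤ γ) :
    ‖G₁ + S‖ ≤ (cB + σmax + θ + γ) * ‖d‖ := by
  have hcB : 0 ≤ cB := (norm_nonneg B).trans hB
  rcases hstep with hres | hzero
  · have hBd : ‖B d‖ ≤ cB * ‖d‖ := (B.le_opNorm d).trans (by gcongr)
    have hσd : ‖σ • d‖ ≤ σmax * ‖d‖ := by
      rw [norm_smul, Real.norm_of_nonneg hσ₀]; gcongr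
    calc ‖G₁ + S‖ = ‖(G₀ + B d + σ • d + S) - (B d + σ • d + (G₀ - G₁))‖ := by congr 1; abel
      _ ≤ ‖G₀ + B d + σ • d + S‖ + (‖B d‖ + ‖σ • d‖ + ‖G₀ - G₁‖) :=
        (norm_sub_le _ _).trans (by gcongr; exact norm_add₃_le)
      _ ≤ (cB + σmax + θ + γ) * ‖d‖ := by linarith
  · rw [hzero, norm_zero]
    have : 0 ≤ σmax := hσ₀.trans hσ
    positivity

theorem norm_add_le_mul_sum_Ico {E : Type*} [SeminormedAddCommGroup E] {G : ℕ → E} {D : ℕ → ℝ}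
    {S : E} {γ c : ℝ} {K k m : ℕ} (hKk : K < k) (hkK : k ≤ K + m) (hγ : 0 ≤ γ) (hγc : γ ≤ c)
    (hD : ∀ t, 0 ≤ D t) (hG : ∀ t, ‖G (t + 1) - G t‖ ≤ γ * D t)
    (hK : ‖G (K + 1) + S‖ ≤ c * D K) :
    ‖G k + S‖ ≤ c * ∑ t ∈ Finset.Ico (k - m) k, D t := by
  have hdrift : ‖G k - G (K + 1)‖ ≤ c * ∑ t ∈ Finset.Ico (K + 1) k, D t := by
    rw [← dist_eq_norm, dist_comm, Finset.mul_sum]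
    refine dist_le_Ico_sum_of_dist_le hKk fun _ _ => ?_
    rw [dist_comm, dist_eq_norm]
    exact (hG _).trans (mul_le_mul_of_nonneg_right hγc (hD _))
  calc ‖G k + S‖ = ‖(G k - G (K + 1)) + (G (K + 1) + S)‖ := by congr 1; abel
    _ ≤ c * ∑ t ∈ Finset.Ico (K + 1) k, D t + c * D K :=
      (norm_add_le _ _).trans (add_le_add hdrift hK)
    _ = c * ∑ t ∈ Finset.Ico K k, D t := by rw [Finset.sum_eq_sum_Ico_succ_bot hKk]; ring
    _ ≤ c * ∑ t ∈ Finset.Ico (k - m) k, D t :=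
      mul_le_mul_of_nonneg_left (Finset.sum_le_sum_of_subset_of_nonneg
        (Finset.Ico_subset_Ico (by omega) le_rfl) fun t _ _ => hD t) (hγ.trans hγc)

section Blocks

variable {ι : Type*} [DecidableEq ι]

noncomputable def partialGrad {E : ι → Type*} [∀ i, NormedAddCommGroup (E i)]
    [∀ i, InnerProductSpace ℝ (E i)] [∀ i, CompleteSpace (E i)] (f : (∀ i, E i) → ℝ) (y : ∀ i, E i) (i : ι) : E i :=
  gradient (fun t => f (Function.update y i t)) (y i)

/-- The paper's `k̂`; it is `0`, not a visit, when block `i` was not chosen before `k`. -/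
def lastVisit (ik : ℕ → ι) (i : ι) (k : ℕ) : ℕ :=
  Nat.findGreatest (fun t => ik t = i) (k - 1)

variable {ik : ℕ → ι} {i : ι} {k : ℕ}

theorem lastVisit_lt (hk : 0 < k) : lastVisit ik i k < k :=
  (Nat.findGreatest_le _).trans_lt (by omega)

theorem ne_of_lastVisit_lt {t : ℕ} (h₁ : lastVisit ik i k < t) (h₂ : t < k) : ik t ≠ i :=
  Nat.findGreatest_is_greatest h₁ (by omega)

theorem eq_lastVisit_succ {E : ι → Type*} {x : ℕ → ∀ i, E i}
    (hupdate : ∀ t, ∀ j, j ≠ ik t → x (t + 1) j = x t j) (hk : 0 < k) :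
    x k i = x (lastVisit ik i k + 1) i := by
  have hfrozen : ∀ n, lastVisit ik i k + 1 ≤ n → n ≤ k → x n i = x (lastVisit ik i k + 1) i := by
    intro n hn
    induction n, hn using Nat.le_induction with
    | base => exact fun _ => rfl
    | succ n hn ih =>
      intro hnk
      rw [hupdate n i (ne_of_lastVisit_lt (k := k) (by omega) (by omega)).symm, ih (by omega)]
  exact hfrozen k (lastVisit_lt hk) le_rfl

theorem lastVisit_spec {E : ι → Type*} {x : ℕ → ∀ i, E i} {m : ℕ} (hfirst : ∃ t ≤ m, ik t = i)
    (hgap : ∀ t, ik t = i → ∃ t', t < t' ∧ t' ≤ t + m ∧ ik t' = i)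
    (hupdate : ∀ t, ∀ j, j ≠ ik t → x (t + 1) j = x t j) (hk : m < k) :
    ik (lastVisit ik i k) = i ∧ lastVisit ik i k < k ∧ k ≤ lastVisit ik i k + m ∧
      x k i = x (lastVisit ik i k + 1) i := by
  obtain ⟨t₀, ht₀, hvisit₀⟩ := hfirst
  have hvisit : ik (lastVisit ik i k) = i :=
    Nat.findGreatest_spec (P := fun t => ik t = i) (by omega) hvisit₀
  refine ⟨hvisit, lastVisit_lt (by omega), ?_, eq_lastVisit_succ hupdate (by omega)⟩
  by_contra! hkm
  obtain ⟨t, ht, htm, hti⟩ := hgap _ hvisit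
  exact ne_of_lastVisit_lt ht (by omega) hti

end Blocks

theorem bcd_convergence_general
    (p : ℕ) (nd : Fin p → ℕ)
    (f : (∀ i : Fin p, EuclideanSpace ℝ (Fin (nd i))) → ℝ)
    (A : ∀ i : Fin p, ℕ → Set (EuclideanSpace ℝ (Fin (nd i))))
    (ng : Fin p → ℕ → ℕ)
    (g : ∀ i : Fin p, ℕ → ℕ → EuclideanSpace ℝ (Fin (nd i)) → ℝ)
    (α δ θ γ cB : ℝ)
    (hα : 0 < α) (hδ : 0 ≤ δ) (hθ : 0 < θ) (hγ : 0 < γ)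
    (x : ℕ → ∀ i : Fin p, EuclideanSpace ℝ (Fin (nd i)))
    (ik : ℕ → Fin p)
    (jk : ℕ → ℕ)
    (Bk : ∀ k : ℕ,
      EuclideanSpace ℝ (Fin (nd (ik k))) →L[ℝ] EuclideanSpace ℝ (Fin (nd (ik k))))
    (hBnorm : ∀ k, ‖Bk k‖ ≤ cB)
    (σ : ℕ → ℝ) (hσ : ∀ k, 0 ≤ σ k ∧ σ k < 2 * (γ + cB + 2 * α))
    (μ : ℕ → ℕ → ℝ) (hμ : ∀ k ℓ, 0 ≤ μ k ℓ)
    (hupdate : ∀ k, ∀ j : Fin p, j ≠ ik k → x (k + 1) j = x k j)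
    (hmem : ∀ k, x (k + 1) (ik k) ∈ A (ik k) (jk k))
    (halt : ∀ k,
      (⟪gradient (fun t => f (Function.update (x k) (ik k) t)) (x k (ik k)),
          x (k + 1) (ik k) - x k (ik k)⟫
        + 1 / 2 * ⟪x (k + 1) (ik k) - x k (ik k),
            Bk k (x (k + 1) (ik k) - x k (ik k))⟫
        + σ k / 2 * ‖x (k + 1) (ik k) - x k (ik k)‖ ^ 2 ≤ 0
       ∧ ‖gradient (fun t => f (Function.update (x k) (ik k) t)) (x k (ik k))
            + Bk k (x (k + 1) (ik k) - x k (ik k))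
            + σ k • (x (k + 1) (ik k) - x k (ik k))
            + ∑ ℓ ∈ Finset.range (ng (ik k) (jk k)),
                μ k ℓ • gradient (g (ik k) (jk k) ℓ) (x (k + 1) (ik k))‖
          ≤ θ * ‖x (k + 1) (ik k) - x k (ik k)‖
       ∧ ∀ ℓ < ng (ik k) (jk k),
            min (μ k ℓ) (-g (ik k) (jk k) ℓ (x (k + 1) (ik k))) ≤ δ)
      ∨ (σ k = 0
       ∧ gradient (fun t => f (Function.update (x (k + 1)) (ik k) t)) (x (k + 1) (ik k))
            + ∑ ℓ ∈ Finset.range (ng (ik k) (jk k)),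
                μ k ℓ • gradient (g (ik k) (jk k) ℓ) (x (k + 1) (ik k)) = 0
       ∧ ∀ ℓ < ng (ik k) (jk k),
            min (μ k ℓ) (-g (ik k) (jk k) ℓ (x (k + 1) (ik k))) ≤ 0))
    (hdescent : ∀ k, f (x (k + 1)) ≤ f (x k) - α * ‖x (k + 1) (ik k) - x k (ik k)‖ ^ 2)
    (hlip1 : ∀ k,
      ‖gradient (fun t => f (Function.update (x k) (ik k) t)) (x k (ik k))
        - gradient (fun t => f (Function.update (x (k + 1)) (ik k) t)) (x (k + 1) (ik k))‖
      ≤ γ * ‖x (k + 1) (ik k) - x k (ik k)‖)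
    (hlip2 : ∀ k₁ k₂ : ℕ, ∀ i₀ : Fin p, (∀ j : Fin p, j ≠ i₀ → x k₁ j = x k₂ j) →
      ∀ i : Fin p,
        ‖gradient (fun t => f (Function.update (x k₁) i t)) (x k₁ i)
          - gradient (fun t => f (Function.update (x k₂) i t)) (x k₂ i)‖
        ≤ γ * ‖x k₂ i₀ - x k₁ i₀‖)
    (fbound : ℝ) (hfb : ∀ k, fbound ≤ f (x k))
    (m : ℕ)
    (hfirst : ∀ ν : Fin p, ∃ k ≤ m, ik k = ν)
    (hgap : ∀ ν : Fin p, ∀ k, ik k = ν → ∃ k', k < k' ∧ k' ≤ k + m ∧ ik k' = ν) :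
    ∀ i : Fin p,
      (∀ k, m < k →
        x k i ∈ A i (jk (Nat.findGreatest (fun t => ik t = i) (k - 1)))
        ∧ ∀ ℓ < ng i (jk (Nat.findGreatest (fun t => ik t = i) (k - 1))),
            0 ≤ μ (Nat.findGreatest (fun t => ik t = i) (k - 1)) ℓ
            ∧ min (μ (Nat.findGreatest (fun t => ik t = i) (k - 1)) ℓ)
                (-g i (jk (Nat.findGreatest (fun t => ik t = i) (k - 1))) ℓ (x k i)) ≤ δ)
      ∧ Tendsto (fun k : ℕ =>
          ‖gradient (fun t => f (Function.update (x k) i t)) (x k i)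
            + ∑ ℓ ∈ Finset.range (ng i (jk (Nat.findGreatest (fun t => ik t = i) (k - 1)))),
                μ (Nat.findGreatest (fun t => ik t = i) (k - 1)) ℓ
                  • gradient (g i (jk (Nat.findGreatest (fun t => ik t = i) (k - 1))) ℓ)
                      (x k i)‖)
          atTop (𝓝 0) := by
  set D : ℕ → ℝ := fun t => ‖x (t + 1) (ik t) - x t (ik t)‖
  have hD : Tendsto D atTop (𝓝 0) :=
    tendsto_zero_of_sufficient_decrease (u := fun k => f (x k)) hα (fun _ => norm_nonneg _)
      hdescent hfb
  set c₄ := cB + 2 * (γ + cB + 2 * α) + θ + γ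
  have hγc : γ ≤ c₄ := by linarith [hσ 0, (norm_nonneg _).trans (hBnorm 0)]
  have hstep : ∀ K, ‖partialGrad f (x (K + 1)) (ik K) + ∑ ℓ ∈ Finset.range (ng (ik K) (jk K)),
      μ K ℓ • gradient (g (ik K) (jk K) ℓ) (x (K + 1) (ik K))‖ ≤ c₄ * D K := fun K =>
    norm_add_le_of_step ((halt K).imp (·.2.1) (·.2.1)) (hlip1 K) (hBnorm K) (hσ K).1 (hσ K).2.le
      hθ.le hγ.le
  intro i
  have hG : ∀ t, ‖partialGrad f (x (t + 1)) i - partialGrad f (x t) i‖ ≤ γ * D t := fun t => by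
    rw [norm_sub_rev]
    exact hlip2 t (t + 1) (ik t) (fun j hj => (hupdate t j hj).symm) i
  have hlast := fun k (hk : m < k) => lastVisit_spec (hfirst i) (hgap i) hupdate hk
  have hkkt : ∀ K k, ik K = i → x k i = x (K + 1) i → x k i ∈ A i (jk K) ∧
      ∀ ℓ < ng i (jk K), 0 ≤ μ K ℓ ∧ min (μ K ℓ) (-g i (jk K) ℓ (x k i)) ≤ δ := by
    rintro K k rfl hx
    rw [hx]
    exact ⟨hmem K, fun ℓ hℓ => ⟨hμ K ℓ, (halt K).elim (·.2.2 ℓ hℓ) fun h => (h.2.2 ℓ hℓ).trans hδ⟩⟩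
  have hres : ∀ K k, ik K = i ∧ K < k ∧ k ≤ K + m ∧ x k i = x (K + 1) i →
      ‖partialGrad f (x k) i + ∑ ℓ ∈ Finset.range (ng i (jk K)),
        μ K ℓ • gradient (g i (jk K) ℓ) (x k i)‖ ≤ c₄ * ∑ t ∈ Finset.Ico (k - m) k, D t := by
    rintro K k ⟨rfl, hKk, hkK, hx⟩
    rw [hx]
    exact norm_add_le_mul_sum_Ico (G := fun t => partialGrad f (x t) (ik K)) hKk hkK hγ.le hγc
      (fun _ => norm_nonneg _) hG (hstep K)
  refine ⟨fun k hk => hkkt _ k (hlast k hk).1 (hlast k hk).2.2.2, ?_⟩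
  refine squeeze_zero' (.of_forall fun _ => norm_nonneg _)
    ((eventually_gt_atTop m).mono fun k hk => hres _ k (hlast k hk))
    (by simpa using (tendsto_sum_Ico_sub_of_tendsto hD m).const_mul c₄)

/-- Theorem 4.1 of the paper (convergence part). Under the BCD setting, for each
block `i` and each iteration `k > m`, writing `k̂ = Nat.findGreatest (ik · = i) (k-1)`
for the latest iteration before `k` at which block `i` was chosen, the iterate
`x k i` belongs to the covering set `A i (jk k̂)`, the multipliers `μ k̂ ℓ ≥ 0`
satisfy the `δ`-complementarity condition, and the KKT residual
`‖∇_i f(x^k) + Σ_ℓ μ_ℓ ∇g_{i,o(i,k),ℓ}(x_i^k)‖` tends to zero. -/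
theorem bcd_convergence
    (p : ℕ) (hp : 0 < p) (nd : Fin p → ℕ)
    (f : (∀ i : Fin p, EuclideanSpace ℝ (Fin (nd i))) → ℝ)
    (hf : Differentiable ℝ f)
    (Ω : ∀ i : Fin p, Set (EuclideanSpace ℝ (Fin (nd i))))
    (hΩclosed : ∀ i, IsClosed (Ω i))
    (hΩbdd : ∀ i, Bornology.IsBounded (Ω i))
    (nops : Fin p → ℕ)
    (A : ∀ i : Fin p, ℕ → Set (EuclideanSpace ℝ (Fin (nd i))))
    (hAopen : ∀ i j, j < nops i → IsOpen (A i j))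
    (hcover : ∀ i, Ω i ⊆ ⋃ j ∈ Finset.range (nops i), A i j)
    (ng : Fin p → ℕ → ℕ)
    (g : ∀ i : Fin p, ℕ → ℕ → EuclideanSpace ℝ (Fin (nd i)) → ℝ)
    (hgdiff : ∀ i j ℓ, j < nops i → ℓ < ng i j →
      ∀ z ∈ A i j, DifferentiableAt ℝ (g i j ℓ) z)
    (hconstitutive : ∀ i j, j < nops i →
      Ω i ∩ A i j = {z ∈ A i j | ∀ ℓ < ng i j, g i j ℓ z ≤ 0})
    (α δ θ γ cB : ℝ)
    (hα : 0 < α) (hδ : 0 ≤ δ) (hθ : 0 < θ) (hγ : 0 < γ) (hcB : 0 < cB)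
    (x : ℕ → ∀ i : Fin p, EuclideanSpace ℝ (Fin (nd i)))
    (hx0 : ∀ i, x 0 i ∈ Ω i)
    (ik : ℕ → Fin p)
    (jk : ℕ → ℕ) (hjk : ∀ k, jk k < nops (ik k))
    (Bk : ∀ k : ℕ,
      EuclideanSpace ℝ (Fin (nd (ik k))) →L[ℝ] EuclideanSpace ℝ (Fin (nd (ik k))))
    (hBsym : ∀ k, IsSelfAdjoint (Bk k)) (hBnorm : ∀ k, ‖Bk k‖ ≤ cB)
    (σ : ℕ → ℝ) (hσ : ∀ k, 0 ≤ σ k ∧ σ k < 2 * (γ + cB + 2 * α))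
    (μ : ℕ → ℕ → ℝ) (hμ : ∀ k ℓ, 0 ≤ μ k ℓ)
    (hupdate : ∀ k, ∀ j : Fin p, j ≠ ik k → x (k + 1) j = x k j)
    (hmem : ∀ k, x (k + 1) (ik k) ∈ A (ik k) (jk k))
    (halt : ∀ k,
      (⟪gradient (fun t => f (Function.update (x k) (ik k) t)) (x k (ik k)),
          x (k + 1) (ik k) - x k (ik k)⟫
        + 1 / 2 * ⟪x (k + 1) (ik k) - x k (ik k),
            Bk k (x (k + 1) (ik k) - x k (ik k))⟫
        + σ k / 2 * ‖x (k + 1) (ik k) - x k (ik k)‖ ^ 2 ≤ 0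
       ∧ ‖gradient (fun t => f (Function.update (x k) (ik k) t)) (x k (ik k))
            + Bk k (x (k + 1) (ik k) - x k (ik k))
            + σ k • (x (k + 1) (ik k) - x k (ik k))
            + ∑ ℓ ∈ Finset.range (ng (ik k) (jk k)),
                μ k ℓ • gradient (g (ik k) (jk k) ℓ) (x (k + 1) (ik k))‖
          ≤ θ * ‖x (k + 1) (ik k) - x k (ik k)‖
       ∧ ∀ ℓ < ng (ik k) (jk k),
            min (μ k ℓ) (-g (ik k) (jk k) ℓ (x (k + 1) (ik k))) ≤ δ)
      ∨ (σ k = 0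
       ∧ gradient (fun t => f (Function.update (x (k + 1)) (ik k) t)) (x (k + 1) (ik k))
            + ∑ ℓ ∈ Finset.range (ng (ik k) (jk k)),
                μ k ℓ • gradient (g (ik k) (jk k) ℓ) (x (k + 1) (ik k)) = 0
       ∧ ∀ ℓ < ng (ik k) (jk k),
            min (μ k ℓ) (-g (ik k) (jk k) ℓ (x (k + 1) (ik k))) ≤ 0))
    (hdescent : ∀ k, f (x (k + 1)) ≤ f (x k) - α * ‖x (k + 1) (ik k) - x k (ik k)‖ ^ 2)
    (hlip1 : ∀ k,
      ‖gradient (fun t => f (Function.update (x k) (ik k) t)) (x k (ik k))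
        - gradient (fun t => f (Function.update (x (k + 1)) (ik k) t)) (x (k + 1) (ik k))‖
      ≤ γ * ‖x (k + 1) (ik k) - x k (ik k)‖)
    (hlip2 : ∀ k₁ k₂ : ℕ, ∀ i₀ : Fin p, (∀ j : Fin p, j ≠ i₀ → x k₁ j = x k₂ j) →
      ∀ i : Fin p,
        ‖gradient (fun t => f (Function.update (x k₁) i t)) (x k₁ i)
          - gradient (fun t => f (Function.update (x k₂) i t)) (x k₂ i)‖
        ≤ γ * ‖x k₂ i₀ - x k₁ i₀‖)
    (fbound : ℝ) (hfb : ∀ k, fbound ≤ f (x k))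
    (m : ℕ) (hm : 1 ≤ m)
    (hfirst : ∀ ν : Fin p, ∃ k ≤ m, ik k = ν)
    (hgap : ∀ ν : Fin p, ∀ k, ik k = ν → ∃ k', k < k' ∧ k' ≤ k + m ∧ ik k' = ν) :
    ∀ i : Fin p,
      (∀ k, m < k →
        x k i ∈ A i (jk (Nat.findGreatest (fun t => ik t = i) (k - 1)))
        ∧ ∀ ℓ < ng i (jk (Nat.findGreatest (fun t => ik t = i) (k - 1))),
            0 ≤ μ (Nat.findGreatest (fun t => ik t = i) (k - 1)) ℓ
            ∧ min (μ (Nat.findGreatest (fun t => ik t = i) (k - 1)) ℓ)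
                (-g i (jk (Nat.findGreatest (fun t => ik t = i) (k - 1))) ℓ (x k i)) ≤ δ)
      ∧ Tendsto (fun k : ℕ =>
          ‖gradient (fun t => f (Function.update (x k) i t)) (x k i)
            + ∑ ℓ ∈ Finset.range (ng i (jk (Nat.findGreatest (fun t => ik t = i) (k - 1)))),
                μ (Nat.findGreatest (fun t => ik t = i) (k - 1)) ℓ
                  • gradient (g i (jk (Nat.findGreatest (fun t => ik t = i) (k - 1))) ℓ)
                      (x k i)‖)
          atTop (𝓝 0) :=
  bcd_convergence_general p nd f A ng g α δ θ γ cB hα hδ hθ hγ x ik jk Bk hBnorm σ hσ μ hμ hupdate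
    hmem halt hdescent hlip1 hlip2 fbound hfb m hfirst hgap
end

section
/- Under the BCD setting and Assumptions stated in the context, with o(i,k) and μ_{i,o(i,k),ℓ} as defined there, for every fixed block i ∈ {1,…,p} and every ε > 0, the number of iterations k > m at which ‖∇_i f(x^k) + Σ_{ℓ=1}^{n_g(i,o(i,k))} μ_{i,o(i,k),ℓ} ∇g_{i,o(i,k),ℓ}(x_i^k)‖ > ε is bounded above by (f(x⁰) − f_bound)/(α (ε/(c₄ m))²), where c₄ := c_B + σ_max + θ + γ. -/
open Filter Topology RealInnerProductSpace

/-- Complexity part of Theorem 4.1 of the paper. Under the BCD setting, for each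
fixed block `i` and each `ε > 0`, the number of iterations `k > m` at which the
approximate KKT residual for block `i` (with multipliers from the latest iteration
`k̂ = Nat.findGreatest (ik · = i) (k-1)` at which block `i` was chosen) exceeds `ε`
is at most `(f (x 0) - fbound) / (α (ε/(c₄ m))²)`, where
`c₄ = c_B + σmax + θ + γ` and `σmax = 2(γ + c_B + 2α)`. -/
theorem bcd_complexity_per_block
    (p : ℕ) (hp : 0 < p) (nd : Fin p → ℕ)
    (f : (∀ i : Fin p, EuclideanSpace ℝ (Fin (nd i))) → ℝ)
    (hf : Differentiable ℝ f)
    (Ω : ∀ i : Fin p, Set (EuclideanSpace ℝ (Fin (nd i))))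
    (hΩclosed : ∀ i, IsClosed (Ω i))
    (hΩbdd : ∀ i, Bornology.IsBounded (Ω i))
    (nops : Fin p → ℕ)
    (A : ∀ i : Fin p, ℕ → Set (EuclideanSpace ℝ (Fin (nd i))))
    (hAopen : ∀ i j, j < nops i → IsOpen (A i j))
    (hcover : ∀ i, Ω i ⊆ ⋃ j ∈ Finset.range (nops i), A i j)
    (ng : Fin p → ℕ → ℕ)
    (g : ∀ i : Fin p, ℕ → ℕ → EuclideanSpace ℝ (Fin (nd i)) → ℝ)
    (hgdiff : ∀ i j ℓ, j < nops i → ℓ < ng i j →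
      ∀ z ∈ A i j, DifferentiableAt ℝ (g i j ℓ) z)
    (hconstitutive : ∀ i j, j < nops i →
      Ω i ∩ A i j = {z ∈ A i j | ∀ ℓ < ng i j, g i j ℓ z ≤ 0})
    (α δ θ γ cB : ℝ)
    (hα : 0 < α) (hδ : 0 ≤ δ) (hθ : 0 < θ) (hγ : 0 < γ) (hcB : 0 < cB)
    (x : ℕ → ∀ i : Fin p, EuclideanSpace ℝ (Fin (nd i)))
    (hx0 : ∀ i, x 0 i ∈ Ω i)
    (ik : ℕ → Fin p)
    (jk : ℕ → ℕ) (hjk : ∀ k, jk k < nops (ik k))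
    (Bk : ∀ k : ℕ,
      EuclideanSpace ℝ (Fin (nd (ik k))) →L[ℝ] EuclideanSpace ℝ (Fin (nd (ik k))))
    (hBsym : ∀ k, IsSelfAdjoint (Bk k)) (hBnorm : ∀ k, ‖Bk k‖ ≤ cB)
    (σ : ℕ → ℝ) (hσ : ∀ k, 0 ≤ σ k ∧ σ k < 2 * (γ + cB + 2 * α))
    (μ : ℕ → ℕ → ℝ) (hμ : ∀ k ℓ, 0 ≤ μ k ℓ)
    (hupdate : ∀ k, ∀ j : Fin p, j ≠ ik k → x (k + 1) j = x k j)
    (hmem : ∀ k, x (k + 1) (ik k) ∈ A (ik k) (jk k))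
    (halt : ∀ k,
      (⟪gradient (fun t => f (Function.update (x k) (ik k) t)) (x k (ik k)),
          x (k + 1) (ik k) - x k (ik k)⟫
        + 1 / 2 * ⟪x (k + 1) (ik k) - x k (ik k),
            Bk k (x (k + 1) (ik k) - x k (ik k))⟫
        + σ k / 2 * ‖x (k + 1) (ik k) - x k (ik k)‖ ^ 2 ≤ 0
       ∧ ‖gradient (fun t => f (Function.update (x k) (ik k) t)) (x k (ik k))
            + Bk k (x (k + 1) (ik k) - x k (ik k))
            + σ k • (x (k + 1) (ik k) - x k (ik k))
            + ∑ ℓ ∈ Finset.range (ng (ik k) (jk k)),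
                μ k ℓ • gradient (g (ik k) (jk k) ℓ) (x (k + 1) (ik k))‖
          ≤ θ * ‖x (k + 1) (ik k) - x k (ik k)‖
       ∧ ∀ ℓ < ng (ik k) (jk k),
            min (μ k ℓ) (-g (ik k) (jk k) ℓ (x (k + 1) (ik k))) ≤ δ)
      ∨ (σ k = 0
       ∧ gradient (fun t => f (Function.update (x (k + 1)) (ik k) t)) (x (k + 1) (ik k))
            + ∑ ℓ ∈ Finset.range (ng (ik k) (jk k)),
                μ k ℓ • gradient (g (ik k) (jk k) ℓ) (x (k + 1) (ik k)) = 0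
       ∧ ∀ ℓ < ng (ik k) (jk k),
            min (μ k ℓ) (-g (ik k) (jk k) ℓ (x (k + 1) (ik k))) ≤ 0))
    (hdescent : ∀ k, f (x (k + 1)) ≤ f (x k) - α * ‖x (k + 1) (ik k) - x k (ik k)‖ ^ 2)
    (hlip1 : ∀ k,
      ‖gradient (fun t => f (Function.update (x k) (ik k) t)) (x k (ik k))
        - gradient (fun t => f (Function.update (x (k + 1)) (ik k) t)) (x (k + 1) (ik k))‖
      ≤ γ * ‖x (k + 1) (ik k) - x k (ik k)‖)
    (hlip2 : ∀ k₁ k₂ : ℕ, ∀ i₀ : Fin p, (∀ j : Fin p, j ≠ i₀ → x k₁ j = x k₂ j) →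
      ∀ i : Fin p,
        ‖gradient (fun t => f (Function.update (x k₁) i t)) (x k₁ i)
          - gradient (fun t => f (Function.update (x k₂) i t)) (x k₂ i)‖
        ≤ γ * ‖x k₂ i₀ - x k₁ i₀‖)
    (fbound : ℝ) (hfb : ∀ k, fbound ≤ f (x k))
    (m : ℕ) (hm : 1 ≤ m)
    (hfirst : ∀ ν : Fin p, ∃ k ≤ m, ik k = ν)
    (hgap : ∀ ν : Fin p, ∀ k, ik k = ν → ∃ k', k < k' ∧ k' ≤ k + m ∧ ik k' = ν) :
    ∀ i : Fin p, ∀ ε : ℝ, 0 < ε →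
      {k : ℕ | m < k ∧ ε <
        ‖gradient (fun t => f (Function.update (x k) i t)) (x k i)
          + ∑ ℓ ∈ Finset.range (ng i (jk (Nat.findGreatest (fun t => ik t = i) (k - 1)))),
              μ (Nat.findGreatest (fun t => ik t = i) (k - 1)) ℓ
                • gradient (g i (jk (Nat.findGreatest (fun t => ik t = i) (k - 1))) ℓ)
                    (x k i)‖}.Finite
      ∧ (({k : ℕ | m < k ∧ ε <
        ‖gradient (fun t => f (Function.update (x k) i t)) (x k i)
          + ∑ ℓ ∈ Finset.range (ng i (jk (Nat.findGreatest (fun t => ik t = i) (k - 1)))),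
              μ (Nat.findGreatest (fun t => ik t = i) (k - 1)) ℓ
                • gradient (g i (jk (Nat.findGreatest (fun t => ik t = i) (k - 1))) ℓ)
                    (x k i)‖}.ncard : ℝ)
          ≤ (f (x 0) - fbound) /
              (α * (ε / ((cB + 2 * (γ + cB + 2 * α) + θ + γ) * m)) ^ 2)) := by

  intro i ε hε
  classical
  -- positive constants
  have hmpos : (0:ℝ) < (m:ℝ) := by
    have : 0 < m := by omega
    exact_mod_cast this
  have hm0 : (m:ℝ) ≠ 0 := ne_of_gt hmpos
  set c₄ : ℝ := cB + 2 * (γ + cB + 2 * α) + θ + γ with hc₄def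
  have hc₄pos : 0 < c₄ := by rw [hc₄def]; linarith
  set E : ℝ := α * (ε / (c₄ * (m:ℝ))) ^ 2 with hEdef
  have hE : 0 < E := by
    rw [hEdef]
    have h1 : 0 < ε / (c₄ * (m:ℝ)) := div_pos hε (mul_pos hc₄pos hmpos)
    exact mul_pos hα (pow_pos h1 2)
  set D : ℕ → ℝ := fun t => ‖x (t + 1) (ik t) - x t (ik t)‖ with hD
  have hDnonneg : ∀ t, 0 ≤ D t := fun t => norm_nonneg _
  set kh : ℕ → ℕ := fun k => Nat.findGreatest (fun t => ik t = i) (k - 1) with hkh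
  -- telescoping of f
  have hftel : ∀ N, α * ∑ t ∈ Finset.range N, D t ^ 2 ≤ f (x 0) - f (x N) := by
    intro N
    induction N with
    | zero => simp
    | succ N ih =>
      rw [Finset.sum_range_succ, mul_add]
      have hdes : f (x (N + 1)) ≤ f (x N) - α * D N ^ 2 := hdescent N
      linarith
  -- telescoping of gradients over iterations not touching block ν
  have hGtel : ∀ (ν : Fin p) (a b : ℕ), a ≤ b → (∀ t, a ≤ t → t < b → ik t ≠ ν) →
      x b ν = x a ν ∧
      ‖gradient (fun u => f (Function.update (x b) ν u)) (x b ν)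
        - gradient (fun u => f (Function.update (x a) ν u)) (x a ν)‖
        ≤ γ * ∑ t ∈ Finset.Ico a b, D t := by
    intro ν a b
    induction b with
    | zero =>
      intro hab _
      obtain rfl : a = 0 := Nat.le_zero.mp hab
      exact ⟨rfl, by simp⟩
    | succ b ih =>
      intro hab hne
      rcases eq_or_lt_of_le hab with heq | hlt
      · subst heq
        exact ⟨rfl, by simp⟩
      · have hab' : a ≤ b := Nat.lt_succ_iff.mp hlt
        obtain ⟨hxb, hGb⟩ := ih hab' (fun t h1 h2 => hne t h1 (h2.trans (Nat.lt_succ_self b)))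
        have hikb : ik b ≠ ν := hne b hab' (Nat.lt_succ_self b)
        have hxstep : x (b + 1) ν = x b ν := hupdate b ν (Ne.symm hikb)
        have hstep' : ‖gradient (fun u => f (Function.update (x b) ν u)) (x b ν)
            - gradient (fun u => f (Function.update (x (b + 1)) ν u)) (x (b + 1) ν)‖
            ≤ γ * D b :=
          hlip2 b (b + 1) (ik b) (fun j hj => (hupdate b j hj).symm) ν
        refine ⟨by rw [hxstep, hxb], ?_⟩
        rw [Finset.sum_Ico_succ_top hab', mul_add]
        have tri : ‖gradient (fun u => f (Function.update (x (b + 1)) ν u)) (x (b + 1) ν)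
              - gradient (fun u => f (Function.update (x a) ν u)) (x a ν)‖
            ≤ ‖gradient (fun u => f (Function.update (x (b + 1)) ν u)) (x (b + 1) ν)
                - gradient (fun u => f (Function.update (x b) ν u)) (x b ν)‖
              + ‖gradient (fun u => f (Function.update (x b) ν u)) (x b ν)
                - gradient (fun u => f (Function.update (x a) ν u)) (x a ν)‖ := by
          have := norm_add_le
            (gradient (fun u => f (Function.update (x (b + 1)) ν u)) (x (b + 1) ν)
              - gradient (fun u => f (Function.update (x b) ν u)) (x b ν))
            (gradient (fun u => f (Function.update (x b) ν u)) (x b ν)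
              - gradient (fun u => f (Function.update (x a) ν u)) (x a ν))
          rwa [sub_add_sub_cancel] at this
        have hrev : ‖gradient (fun u => f (Function.update (x (b + 1)) ν u)) (x (b + 1) ν)
              - gradient (fun u => f (Function.update (x b) ν u)) (x b ν)‖
            = ‖gradient (fun u => f (Function.update (x b) ν u)) (x b ν)
              - gradient (fun u => f (Function.update (x (b + 1)) ν u)) (x (b + 1) ν)‖ :=
          norm_sub_rev _ _
        linarith
  -- one-step KKT residual bound
  have honestep : ∀ k₀ : ℕ,
      ‖gradient (fun u => f (Function.update (x (k₀ + 1)) (ik k₀) u)) (x (k₀ + 1) (ik k₀))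
        + ∑ ℓ ∈ Finset.range (ng (ik k₀) (jk k₀)),
            μ k₀ ℓ • gradient (g (ik k₀) (jk k₀) ℓ) (x (k₀ + 1) (ik k₀))‖
      ≤ c₄ * D k₀ := by
    intro k₀
    have hDk : D k₀ = ‖x (k₀ + 1) (ik k₀) - x k₀ (ik k₀)‖ := rfl
    rcases halt k₀ with ⟨h1, h2, h3⟩ | ⟨hσ0, heq, h3⟩
    · have hlip := hlip1 k₀
      set d := x (k₀ + 1) (ik k₀) - x k₀ (ik k₀) with hdd
      set G0 := gradient (fun u => f (Function.update (x k₀) (ik k₀) u)) (x k₀ (ik k₀)) with hG0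
      set G1 := gradient (fun u => f (Function.update (x (k₀ + 1)) (ik k₀) u)) (x (k₀ + 1) (ik k₀)) with hG1
      set Sg := ∑ ℓ ∈ Finset.range (ng (ik k₀) (jk k₀)),
          μ k₀ ℓ • gradient (g (ik k₀) (jk k₀) ℓ) (x (k₀ + 1) (ik k₀)) with hSg
      have hBd : ‖(Bk k₀) d‖ ≤ cB * ‖d‖ :=
        le_trans ((Bk k₀).le_opNorm d) (mul_le_mul_of_nonneg_right (hBnorm k₀) (norm_nonneg d))
      have hsd : ‖σ k₀ • d‖ ≤ 2 * (γ + cB + 2 * α) * ‖d‖ := by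
        rw [norm_smul, Real.norm_eq_abs, abs_of_nonneg (hσ k₀).1]
        exact mul_le_mul_of_nonneg_right (hσ k₀).2.le (norm_nonneg d)
      have hid : G1 + Sg
          = (G1 - G0) + (G0 + (Bk k₀) d + σ k₀ • d + Sg) + (-((Bk k₀) d) + -(σ k₀ • d)) := by
        abel
      rw [hDk, hid]
      have hneg : ‖-((Bk k₀) d) + -(σ k₀ • d)‖ ≤ ‖(Bk k₀) d‖ + ‖σ k₀ • d‖ := by
        refine le_trans (norm_add_le _ _) ?_
        rw [norm_neg, norm_neg]
      have hrev : ‖G1 - G0‖ = ‖G0 - G1‖ := norm_sub_rev _ _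
      calc ‖(G1 - G0) + (G0 + (Bk k₀) d + σ k₀ • d + Sg) + (-((Bk k₀) d) + -(σ k₀ • d))‖
          ≤ ‖G1 - G0‖ + ‖G0 + (Bk k₀) d + σ k₀ • d + Sg‖ + ‖-((Bk k₀) d) + -(σ k₀ • d)‖ :=
            norm_add₃_le
        _ ≤ γ * ‖d‖ + θ * ‖d‖ + (cB * ‖d‖ + 2 * (γ + cB + 2 * α) * ‖d‖) := by
            refine add_le_add (add_le_add ?_ h2) (le_trans hneg (add_le_add hBd hsd))
            rw [hrev]; exact hlip
        _ = c₄ * ‖d‖ := by rw [hc₄def]; ring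
    · rw [heq, norm_zero]
      exact mul_nonneg hc₄pos.le (hDnonneg k₀)
  -- spec facts about kh
  have hkhspec : ∀ k, m < k → ik (kh k) = i := by
    intro k hk
    obtain ⟨t₀, ht₀m, ht₀⟩ := hfirst i
    simp only [hkh]
    exact Nat.findGreatest_spec (P := fun t => ik t = i) (m := t₀) (n := k - 1) (by omega) ht₀
  have hkhle : ∀ k, kh k ≤ k - 1 := by
    intro k
    simp only [hkh]
    exact Nat.findGreatest_le _
  -- the key estimate for bad iterations
  have hkey : ∀ k, m < k →
      ε < ‖gradient (fun t => f (Function.update (x k) i t)) (x k i)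
          + ∑ ℓ ∈ Finset.range (ng i (jk (kh k))),
              μ (kh k) ℓ • gradient (g i (jk (kh k)) ℓ) (x k i)‖ →
      kh k < k ∧ k ≤ kh k + m ∧
        (m:ℝ) * E ≤ α * ∑ t ∈ Finset.Ico (kh k) k, D t ^ 2 := by
    intro k hk hbad
    have hKP : ik (kh k) = i := hkhspec k hk
    have hKb : kh k ≤ k - 1 := hkhle k
    have hKlt : kh k < k := by omega
    have hKmax : ∀ t, kh k < t → t < k → ik t ≠ i := by
      intro t h1 h2
      rw [hkh] at h1
      exact Nat.findGreatest_is_greatest h1 (by omega)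
    have hgapK : k ≤ kh k + m := by
      by_contra hcon
      obtain ⟨k', hk1, hk2, hk3⟩ := hgap i (kh k) hKP
      exact hKmax k' hk1 (by omega) hk3
    refine ⟨hKlt, hgapK, ?_⟩
    obtain ⟨hxeq, hGle⟩ := hGtel i (kh k + 1) k (by omega)
      (fun t h1 h2 => hKmax t (by omega) h2)
    have hones := honestep (kh k)
    rw [hKP] at hones
    rw [hxeq] at hbad hGle
    have h5 : ε < c₄ * ∑ t ∈ Finset.Ico (kh k) k, D t := by
      have tri : ‖gradient (fun u => f (Function.update (x k) i u)) (x (kh k + 1) i)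
            + ∑ ℓ ∈ Finset.range (ng i (jk (kh k))),
                μ (kh k) ℓ • gradient (g i (jk (kh k)) ℓ) (x (kh k + 1) i)‖
          ≤ ‖gradient (fun u => f (Function.update (x k) i u)) (x (kh k + 1) i)
              - gradient (fun u => f (Function.update (x (kh k + 1)) i u)) (x (kh k + 1) i)‖
            + ‖gradient (fun u => f (Function.update (x (kh k + 1)) i u)) (x (kh k + 1) i)
              + ∑ ℓ ∈ Finset.range (ng i (jk (kh k))),
                  μ (kh k) ℓ • gradient (g i (jk (kh k)) ℓ) (x (kh k + 1) i)‖ := by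
        rw [show gradient (fun u => f (Function.update (x k) i u)) (x (kh k + 1) i)
            + ∑ ℓ ∈ Finset.range (ng i (jk (kh k))),
                μ (kh k) ℓ • gradient (g i (jk (kh k)) ℓ) (x (kh k + 1) i)
          = (gradient (fun u => f (Function.update (x k) i u)) (x (kh k + 1) i)
              - gradient (fun u => f (Function.update (x (kh k + 1)) i u)) (x (kh k + 1) i))
            + (gradient (fun u => f (Function.update (x (kh k + 1)) i u)) (x (kh k + 1) i)
              + ∑ ℓ ∈ Finset.range (ng i (jk (kh k))),
                  μ (kh k) ℓ • gradient (g i (jk (kh k)) ℓ) (x (kh k + 1) i)) from by abel]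
        exact norm_add_le _ _
      have hsplit : ∑ t ∈ Finset.Ico (kh k) k, D t
          = D (kh k) + ∑ t ∈ Finset.Ico (kh k + 1) k, D t :=
        Finset.sum_eq_sum_Ico_succ_bot hKlt _
      have hsn : 0 ≤ ∑ t ∈ Finset.Ico (kh k + 1) k, D t :=
        Finset.sum_nonneg (fun t _ => hDnonneg t)
      have hγc : γ ≤ c₄ := by rw [hc₄def]; linarith
      calc ε < ‖gradient (fun u => f (Function.update (x k) i u)) (x (kh k + 1) i)
            + ∑ ℓ ∈ Finset.range (ng i (jk (kh k))),
                μ (kh k) ℓ • gradient (g i (jk (kh k)) ℓ) (x (kh k + 1) i)‖ := hbad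
        _ ≤ γ * ∑ t ∈ Finset.Ico (kh k + 1) k, D t + c₄ * D (kh k) := by
            refine le_trans tri (add_le_add hGle hones)
        _ ≤ c₄ * ∑ t ∈ Finset.Ico (kh k) k, D t := by
            rw [hsplit, mul_add]
            have : γ * ∑ t ∈ Finset.Ico (kh k + 1) k, D t
                ≤ c₄ * ∑ t ∈ Finset.Ico (kh k + 1) k, D t :=
              mul_le_mul_of_nonneg_right hγc hsn
            linarith
    -- Cauchy-Schwarz
    have hcs := sq_sum_le_card_mul_sum_sq (s := Finset.Ico (kh k) k) (f := D)
    rw [Nat.card_Ico] at hcs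
    have hcard : ((k - kh k : ℕ) : ℝ) ≤ (m : ℝ) := by exact_mod_cast (by omega : k - kh k ≤ m)
    have hsq2 : 0 ≤ ∑ t ∈ Finset.Ico (kh k) k, D t ^ 2 :=
      Finset.sum_nonneg (fun t _ => sq_nonneg _)
    have hSglb : ε / c₄ < ∑ t ∈ Finset.Ico (kh k) k, D t :=
      (div_lt_iff₀ hc₄pos).mpr (by linarith)
    have hsq : (ε / c₄) ^ 2 < (∑ t ∈ Finset.Ico (kh k) k, D t) ^ 2 :=
      pow_lt_pow_left₀ hSglb (le_of_lt (div_pos hε hc₄pos)) (two_ne_zero)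
    have hmain : (ε / c₄) ^ 2 ≤ (m : ℝ) * ∑ t ∈ Finset.Ico (kh k) k, D t ^ 2 := by
      have h7 : ((k - kh k : ℕ) : ℝ) * (∑ t ∈ Finset.Ico (kh k) k, D t ^ 2)
          ≤ (m : ℝ) * ∑ t ∈ Finset.Ico (kh k) k, D t ^ 2 :=
        mul_le_mul_of_nonneg_right hcard hsq2
      linarith
    have hmE : (m:ℝ) * E = α / (m:ℝ) * (ε / c₄) ^ 2 := by
      rw [hEdef]; field_simp
    calc (m:ℝ) * E = α / (m:ℝ) * (ε / c₄) ^ 2 := hmE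
      _ ≤ α / (m:ℝ) * ((m : ℝ) * ∑ t ∈ Finset.Ico (kh k) k, D t ^ 2) := by
          exact mul_le_mul_of_nonneg_left hmain (by positivity)
      _ = α * ∑ t ∈ Finset.Ico (kh k) k, D t ^ 2 := by field_simp
  -- chain property of kh
  have hchain : ∀ k₁ k₂, m < k₁ → m < k₂ → k₁ < k₂ → kh k₁ = kh k₂ ∨ k₁ ≤ kh k₂ := by
    intro k₁ k₂ hm1 hm2 hlt
    by_cases hc : kh k₂ < k₁
    · left
      have h1 : kh k₁ ≤ kh k₂ := by
        simp only [hkh]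
        exact Nat.findGreatest_mono_right _ (by omega)
      have hP2 : ik (kh k₂) = i := hkhspec k₂ hm2
      have h2 : kh k₂ ≤ kh k₁ := by
        have hP2' : ik (kh k₂) = i := hP2
        simp only [hkh]
        exact Nat.le_findGreatest (by omega : kh k₂ ≤ k₁ - 1) hP2'
      omega
    · right; omega
  -- the counting lemma
  have hcount : ∀ F : Finset ℕ,
      (∀ k ∈ F, m < k ∧ kh k < k ∧ k ≤ kh k + m ∧
        (m:ℝ) * E ≤ α * ∑ t ∈ Finset.Ico (kh k) k, D t ^ 2) →
      (F.card : ℝ) * E ≤ f (x 0) - fbound := by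
    intro F hF
    rcases F.eq_empty_or_nonempty with rfl | hne
    · simpa using (by linarith [hfb 0] : (0:ℝ) ≤ f (x 0) - fbound)
    set S := F.image kh with hSdef
    have hFS : F.card ≤ m * S.card := by
      apply Finset.card_le_mul_card_image
      intro s hs
      have hsub : F.filter (fun a => kh a = s) ⊆ Finset.Ioc s (s + m) := by
        intro a ha
        rw [Finset.mem_filter] at ha
        obtain ⟨haF, hka⟩ := ha
        obtain ⟨_, h1, h2, _⟩ := hF a haF
        rw [Finset.mem_Ioc]; omega
      calc (F.filter (fun a => kh a = s)).card ≤ (Finset.Ioc s (s + m)).card :=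
            Finset.card_le_card hsub
        _ = m := by rw [Nat.card_Ioc]; omega
    have hsel : ∀ s : ℕ, ∃ ks, s ∈ S →
        (ks ∈ F ∧ kh ks = s ∧ ∀ a ∈ F, kh a = s → a ≤ ks) := by
      intro s
      by_cases hs : s ∈ S
      · obtain ⟨a0, ha0, hka0⟩ := Finset.mem_image.mp hs
        have hne' : (F.filter (fun a => kh a = s)).Nonempty :=
          ⟨a0, Finset.mem_filter.mpr ⟨ha0, hka0⟩⟩
        obtain ⟨b, hb, hbsup⟩ := Finset.exists_mem_eq_sup _ hne' id
        rw [Finset.mem_filter] at hb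
        refine ⟨b, fun _ => ⟨hb.1, hb.2, fun a ha hka => ?_⟩⟩
        have hmem2 : a ∈ F.filter (fun c => kh c = s) := Finset.mem_filter.mpr ⟨ha, hka⟩
        have hle := Finset.le_sup (f := id) hmem2
        rw [hbsup] at hle
        simpa using hle
      · exact ⟨0, fun h => absurd h hs⟩
    choose ksel hksel using hsel
    have hkey2 : ∀ s₁ s₂, s₁ ∈ S → s₂ ∈ S → s₁ < s₂ → ksel s₁ ≤ s₂ := by
      intro s₁ s₂ hs₁ hs₂ h12
      obtain ⟨hk1F, hk1h, hk1max⟩ := hksel s₁ hs₁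
      obtain ⟨hk2F, hk2h, hk2max⟩ := hksel s₂ hs₂
      obtain ⟨hm1, hlt1, hle1, _⟩ := hF _ hk1F
      obtain ⟨hm2, hlt2, hle2, _⟩ := hF _ hk2F
      have hk12 : ksel s₁ < ksel s₂ := by
        rcases lt_trichotomy (ksel s₁) (ksel s₂) with h | h | h
        · exact h
        · exfalso; rw [h] at hk1h; omega
        · exfalso
          rcases hchain (ksel s₂) (ksel s₁) hm2 hm1 h with he | hle
          · omega
          · omega
      rcases hchain (ksel s₁) (ksel s₂) hm1 hm2 hk12 with he | hle
      · omega
      · omega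
    have hdisj : (↑S : Set ℕ).PairwiseDisjoint (fun s => Finset.Ico s (ksel s)) := by
      intro s₁ hs₁ s₂ hs₂ hne12
      have hs₁' : s₁ ∈ S := hs₁
      have hs₂' : s₂ ∈ S := hs₂
      rcases Ne.lt_or_gt hne12 with h | h
      · have hks := hkey2 s₁ s₂ hs₁' hs₂' h
        exact Finset.disjoint_left.mpr (fun a ha1 ha2 => by
          rw [Finset.mem_Ico] at ha1 ha2; omega)
      · have hks := hkey2 s₂ s₁ hs₂' hs₁' h
        exact Finset.disjoint_left.mpr (fun a ha1 ha2 => by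
          rw [Finset.mem_Ico] at ha1 ha2; omega)
    set N := F.max' hne + 1 with hN
    have hsubN : ∀ s ∈ S, Finset.Ico s (ksel s) ⊆ Finset.range N := by
      intro s hs t ht
      obtain ⟨hkF, hkhs, _⟩ := hksel s hs
      rw [Finset.mem_Ico] at ht
      rw [Finset.mem_range]
      have := F.le_max' _ hkF
      omega
    have hsum : (S.card : ℝ) * ((m:ℝ) * E) ≤ f (x 0) - fbound := by
      calc (S.card : ℝ) * ((m:ℝ) * E) = ∑ _s ∈ S, (m:ℝ) * E := by
            rw [Finset.sum_const, nsmul_eq_mul]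
        _ ≤ ∑ s ∈ S, α * ∑ t ∈ Finset.Ico s (ksel s), D t ^ 2 := by
            apply Finset.sum_le_sum
            intro s hs
            obtain ⟨hkF, hkhs, _⟩ := hksel s hs
            have h4 := (hF _ hkF).2.2.2
            rw [hkhs] at h4
            exact h4
        _ = α * ∑ s ∈ S, ∑ t ∈ Finset.Ico s (ksel s), D t ^ 2 := (Finset.mul_sum _ _ _).symm
        _ = α * ∑ t ∈ S.biUnion (fun s => Finset.Ico s (ksel s)), D t ^ 2 := by
            rw [Finset.sum_biUnion hdisj]
        _ ≤ α * ∑ t ∈ Finset.range N, D t ^ 2 := by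
            refine mul_le_mul_of_nonneg_left ?_ hα.le
            refine Finset.sum_le_sum_of_subset_of_nonneg ?_ (fun t _ _ => sq_nonneg _)
            intro t ht
            obtain ⟨s, hs, hts⟩ := Finset.mem_biUnion.mp ht
            exact hsubN s hs hts
        _ ≤ f (x 0) - f (x N) := hftel N
        _ ≤ f (x 0) - fbound := by linarith [hfb N]
    calc (F.card : ℝ) * E ≤ ((m * S.card : ℕ) : ℝ) * E := by
          refine mul_le_mul_of_nonneg_right ?_ hE.le
          exact_mod_cast hFS
      _ = (S.card : ℝ) * ((m:ℝ) * E) := by push_cast; ring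
      _ ≤ f (x 0) - fbound := hsum
  -- name the bad set
  set BadSet := {k : ℕ | m < k ∧ ε <
      ‖gradient (fun t => f (Function.update (x k) i t)) (x k i)
        + ∑ ℓ ∈ Finset.range (ng i (jk (Nat.findGreatest (fun t => ik t = i) (k - 1)))),
            μ (Nat.findGreatest (fun t => ik t = i) (k - 1)) ℓ
              • gradient (g i (jk (Nat.findGreatest (fun t => ik t = i) (k - 1))) ℓ)
                  (x k i)‖} with hBadSet
  have hBP : ∀ k ∈ BadSet, m < k ∧ kh k < k ∧ k ≤ kh k + m ∧
      (m:ℝ) * E ≤ α * ∑ t ∈ Finset.Ico (kh k) k, D t ^ 2 := by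
    intro k hk
    rw [hBadSet, Set.mem_setOf_eq] at hk
    obtain ⟨h1, h2⟩ := hk
    exact ⟨h1, hkey k h1 h2⟩
  have hcount' : ∀ F : Finset ℕ, ↑F ⊆ BadSet → (F.card : ℝ) * E ≤ f (x 0) - fbound :=
    fun F hFsub => hcount F (fun k hk => hBP k (hFsub hk))
  have hfin : BadSet.Finite := by
    by_contra hinf
    obtain ⟨F, hFsub, hFcard⟩ :=
      Set.Infinite.exists_subset_card_eq hinf (⌈(f (x 0) - fbound) / E⌉₊ + 1)
    have h1 := hcount' F hFsub
    rw [hFcard] at h1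
    have h2 : ((⌈(f (x 0) - fbound) / E⌉₊ + 1 : ℕ) : ℝ) ≤ (f (x 0) - fbound) / E := by
      rw [le_div_iff₀ hE]; exact_mod_cast h1
    have h3 := Nat.le_ceil ((f (x 0) - fbound) / E)
    push_cast at h2
    linarith
  refine ⟨hfin, ?_⟩
  have h1 := hcount' hfin.toFinset (by simp)
  rw [Set.ncard_eq_toFinset_card _ hfin]
  rw [le_div_iff₀ hE]
  exact h1
end

section
/- Let ψ : ℝ² → ℝ be differentiable at the origin, and let S = {z ∈ ℝ² : ¬(z₁ > 0 and z₂ > 0)} be the complement of the open positive orthant. If the origin is a local minimizer of ψ on S, then ∇ψ(0) = 0. -/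
/-! Each coordinate axis lies entirely in `S`, so along it the origin is a two-sided local
minimum and the directional derivative vanishes in both directions. The two axes span `ℝ²`,
hence the derivative, and with it the gradient, is zero. -/

section LocalMin

variable {E : Type*} [NormedAddCommGroup E] [NormedSpace ℝ E]
  {f : E → ℝ} {f' : E →L[ℝ] ℝ} {s : Set E} {a : E}

theorem mem_posTangentConeAt_of_line_subset {v : E} (hline : ∀ c : ℝ, a + c • v ∈ s) :
    v ∈ posTangentConeAt s a :=
  mem_posTangentConeAt_of_frequently_mem (.of_forall hline)

theorem IsLocalMinOn.hasFDerivWithinAt_apply_eq_zero_of_line_subset {v : E}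
    (h : IsLocalMinOn f s a) (hf : HasFDerivWithinAt f f' s a)
    (hline : ∀ c : ℝ, a + c • v ∈ s) : f' v = 0 :=
  h.hasFDerivWithinAt_eq_zero hf (mem_posTangentConeAt_of_line_subset hline)
    (mem_posTangentConeAt_of_line_subset fun c => by simpa [smul_neg] using hline (-c))

theorem IsLocalMinOn.hasFDerivWithinAt_eq_zero_of_basis_lines_subset {ι : Type*}
    (b : Module.Basis ι ℝ E) (h : IsLocalMinOn f s a) (hf : HasFDerivWithinAt f f' s a)
    (hlines : ∀ i (c : ℝ), a + c • b i ∈ s) : f' = 0 :=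
  ContinuousLinearMap.coe_injective <| b.ext fun i => by
    simpa using h.hasFDerivWithinAt_apply_eq_zero_of_line_subset hf (hlines i)

end LocalMin

theorem smul_single_mem_compl_posOrthant (i : Fin 2) (c : ℝ) :
    c • EuclideanSpace.single i (1 : ℝ) ∈
      {z : EuclideanSpace ℝ (Fin 2) | ¬(0 < z 0 ∧ 0 < z 1)} := by
  fin_cases i <;> simp

/-- Section 2 claim about the internal kink point: if `ψ` is differentiable at the
origin and the origin is a local minimizer of `ψ` on the complement
`S = {z : ¬(z₁ > 0 ∧ z₂ > 0)}` of the open positive orthant, then `∇ψ(0) = 0`. -/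
theorem kink_local_min_grad_zero
    (ψ : EuclideanSpace ℝ (Fin 2) → ℝ)
    (hψ : DifferentiableAt ℝ ψ 0)
    (S : Set (EuclideanSpace ℝ (Fin 2)))
    (hS : S = {z : EuclideanSpace ℝ (Fin 2) | ¬(0 < z 0 ∧ 0 < z 1)})
    (hmin : IsLocalMinOn ψ S 0) :
    gradient ψ 0 = 0 := by
  subst hS
  have hfderiv : fderiv ℝ ψ 0 = 0 :=
    hmin.hasFDerivWithinAt_eq_zero_of_basis_lines_subset (EuclideanSpace.basisFun (Fin 2) ℝ).toBasis
      hψ.hasFDerivAt.hasFDerivWithinAt fun i c => by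
        simpa using smul_single_mem_compl_posOrthant i c
  rw [gradient, hfderiv, map_zero]
end

section
/- Define φ : ℝ² → ℝ by φ(z₁, z₂) = (z₁ z₂)² if z₁ ≥ 0 and z₂ ≥ 0, and φ(z₁, z₂) = −(z₁ z₂)² otherwise. Then: (a) φ is differentiable on all of ℝ², with ∇φ(z) = 0 at every z with z₁ z₂ = 0 (in particular at the origin); and (b) {z ∈ ℝ² : φ(z) ≤ 0} = ℝ² \ {z ∈ ℝ² : z₁ > 0 and z₂ > 0}, i.e. the sublevel set {φ ≤ 0} is exactly the complement of the open positive orthant. -/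
/-- The single constitutive constraint for the internal kink of Section 2:
`φ(z) = (z₁z₂)²` on the closed nonnegative orthant and `φ(z) = -(z₁z₂)²` elsewhere. -/
noncomputable def kinkPhi (z : ℝ × ℝ) : ℝ :=
  if 0 ≤ z.1 ∧ 0 ≤ z.2 then (z.1 * z.2) ^ 2 else -(z.1 * z.2) ^ 2

/-! Since `|φ z| = (z₁z₂)²`, on the axes `φ` is squeezed by the square of a function vanishing
there, so its derivative is `0`. Off the axes the sign condition defining `φ` is locally
constant, so `φ` coincides near the point with the polynomial `(z₁z₂)²` or `-(z₁z₂)²`. -/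

open Filter Topology Asymptotics

section General

variable {𝕜 E : Type*} [NontriviallyNormedField 𝕜] [NormedAddCommGroup E] [NormedSpace 𝕜 E]

theorem HasFDerivAt.zero_of_norm_le {F G : Type*} [NormedAddCommGroup F] [NormedSpace 𝕜 F]
    [NormedAddCommGroup G] [NormedSpace 𝕜 G] {f : E → F} {g : E → G} {x : E}
    (hg : HasFDerivAt g (0 : E →L[𝕜] G) x) (hgx : g x = 0)
    (hle : ∀ᶠ y in 𝓝 x, ‖f y‖ ≤ ‖g y‖) :
    HasFDerivAt f (0 : E →L[𝕜] F) x := by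
  have hfx : f x = 0 := by simpa [hgx] using hle.self_of_nhds
  rw [hasFDerivAt_iff_isLittleO] at hg ⊢
  refine IsBigO.trans_isLittleO (isBigO_iff.2 ⟨1, ?_⟩) hg
  filter_upwards [hle] with y hy
  simpa [hfx, hgx] using hy

theorem HasFDerivAt.sq_of_eq_zero {𝔸 : Type*} [NormedCommRing 𝔸] [NormedAlgebra 𝕜 𝔸]
    {h : E → 𝔸} {h' : E →L[𝕜] 𝔸} {x : E} (hh : HasFDerivAt h h' x) (hx : h x = 0) :
    HasFDerivAt (fun y ↦ h y ^ 2) (0 : E →L[𝕜] 𝔸) x :=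
  (hh.pow 2).congr_fderiv (by ext; simp [hx])

end General

theorem eventually_le_iff_of_ne {α : Type*} [TopologicalSpace α] [LinearOrder α]
    [OrderClosedTopology α] {a x : α} (hx : x ≠ a) :
    ∀ᶠ y in 𝓝 x, (a ≤ y ↔ a ≤ x) := by
  rcases hx.lt_or_gt with hx | hx
  · filter_upwards [eventually_lt_nhds hx] with y hy
    exact iff_of_false hy.not_ge hx.not_ge
  · filter_upwards [eventually_gt_nhds hx] with y hy
    exact iff_of_true hy.le hx.le

theorem norm_kinkPhi (z : ℝ × ℝ) : ‖kinkPhi z‖ = ‖(z.1 * z.2) ^ 2‖ := by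
  unfold kinkPhi
  split_ifs
  · rfl
  · exact norm_neg _

theorem hasFDerivAt_kinkPhi_of_mul_eq_zero {z : ℝ × ℝ} (hz : z.1 * z.2 = 0) :
    HasFDerivAt kinkPhi (0 : ℝ × ℝ →L[ℝ] ℝ) z := by
  have hmul : DifferentiableAt ℝ (fun w : ℝ × ℝ ↦ w.1 * w.2) z := by fun_prop
  exact (hmul.hasFDerivAt.sq_of_eq_zero hz).zero_of_norm_le (by simp [hz])
    (Eventually.of_forall fun w ↦ (norm_kinkPhi w).le)

theorem kinkPhi_eventuallyEq_of_mul_ne_zero {z : ℝ × ℝ} (hz : z.1 * z.2 ≠ 0) :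
    kinkPhi =ᶠ[𝓝 z]
      fun w ↦ if 0 ≤ z.1 ∧ 0 ≤ z.2 then (w.1 * w.2) ^ 2 else -(w.1 * w.2) ^ 2 := by
  filter_upwards [continuousAt_fst.eventually (eventually_le_iff_of_ne (left_ne_zero_of_mul hz)),
    continuousAt_snd.eventually (eventually_le_iff_of_ne (right_ne_zero_of_mul hz))]
    with w hw₁ hw₂
  simp only [kinkPhi, hw₁, hw₂]

theorem differentiable_kinkPhi : Differentiable ℝ kinkPhi := by
  intro z
  by_cases hz : z.1 * z.2 = 0
  · exact (hasFDerivAt_kinkPhi_of_mul_eq_zero hz).differentiableAt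
  · refine DifferentiableAt.congr_of_eventuallyEq ?_ (kinkPhi_eventuallyEq_of_mul_ne_zero hz)
    split_ifs <;> fun_prop

theorem kinkPhi_nonpos_iff (z : ℝ × ℝ) : kinkPhi z ≤ 0 ↔ ¬(0 < z.1 ∧ 0 < z.2) := by
  unfold kinkPhi
  split_ifs with h
  · rw [← not_lt, not_iff_not, sq_pos_iff, mul_ne_zero_iff, h.1.lt_iff_ne', h.2.lt_iff_ne']
  · simp only [neg_nonpos, sq_nonneg, true_iff]
    exact fun hpos ↦ h ⟨hpos.1.le, hpos.2.le⟩

/-- (a) `φ` is differentiable everywhere, with zero derivative at every point with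
`z₁ z₂ = 0` (in particular at the origin); and (b) its sublevel set `{φ ≤ 0}` is
exactly the complement of the open positive orthant. -/
theorem kinkPhi_properties :
    (Differentiable ℝ kinkPhi
      ∧ ∀ z : ℝ × ℝ, z.1 * z.2 = 0 → fderiv ℝ kinkPhi z = 0)
    ∧ {z : ℝ × ℝ | kinkPhi z ≤ 0} = {z : ℝ × ℝ | 0 < z.1 ∧ 0 < z.2}ᶜ :=
  ⟨⟨differentiable_kinkPhi, fun _ hz ↦ (hasFDerivAt_kinkPhi_of_mul_eq_zero hz).fderiv⟩,
    Set.ext kinkPhi_nonpos_iff⟩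
end

section
/- Let A₁,…,A_q ⊂ ℝᵐ be open sets, for each j let g_{j,1},…,g_{j,n_g(j)} : ℝᵐ → ℝ be continuous, and let Ω ⊂ ℝᵐ satisfy: Ω ⊂ ∪_{j=1}^{q} A_j; for each j, Ω ∩ A_j = {z ∈ A_j : g_{j,ℓ}(z) ≤ 0 for all ℓ}; and (Assumption A5) for each j, if z ∈ closure(A_j) and g_{j,ℓ}(z) ≤ 0 for all ℓ, then z ∈ Ω. Let q̂ : ℝᵐ → ℝ be a model function and set F_j := closure(A_j) ∩ {z : g_{j,ℓ}(z) ≤ 0 for all ℓ}. Suppose that for each j with F_j ≠ ∅ there is a global minimizer z_j* of q̂ over F_j, and let jᵇ attain the minimum of q̂(z_j*) over such j. Then: (a) z_{jᵇ}* ∈ Ω; (b) there exists jᵃ with z_{jᵇ}* ∈ A_{jᵃ}; (c) z_{jᵇ}* is a global minimizer of q̂ over F_{jᵃ}; and (d) if some point x̄ with q̂(x̄) ≤ 0 belongs to some F_j, then q̂(z_{jᵇ}*) ≤ 0. -/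
/-- Correctness of the subproblem solver of Section 5. With `Ω` covered by open
sets `A j` with continuous constitutive constraints `g j ℓ`, Assumption 5.1 (A5),
`F j = closure (A j) ∩ {z | g j ℓ z ≤ 0 ∀ℓ}`, per-set global minimizers `zstar j`
of the model `qhat` over `F j`, and `jb` the overall best among them:
(a) `zstar jb ∈ Ω`; (b) `zstar jb` lies in some covering set `A ja`;
(c) `zstar jb` globally minimizes `qhat` over `F ja`; (d) if some point with
nonpositive model value lies in some `F j`, then `qhat (zstar jb) ≤ 0`. -/
theorem bcd_subproblem_solver_correct {md : ℕ} (q : ℕ)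
    (A : Fin q → Set (EuclideanSpace ℝ (Fin md)))
    (hAopen : ∀ j, IsOpen (A j))
    (ng : Fin q → ℕ)
    (g : Fin q → ℕ → EuclideanSpace ℝ (Fin md) → ℝ)
    (hgcont : ∀ j ℓ, ℓ < ng j → Continuous (g j ℓ))
    (Ω : Set (EuclideanSpace ℝ (Fin md)))
    (hcover : Ω ⊆ ⋃ j : Fin q, A j)
    (hconstitutive : ∀ j, Ω ∩ A j = {z ∈ A j | ∀ ℓ < ng j, g j ℓ z ≤ 0})
    (hA5 : ∀ j, ∀ z ∈ closure (A j), (∀ ℓ < ng j, g j ℓ z ≤ 0) → z ∈ Ω)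
    (qhat : EuclideanSpace ℝ (Fin md) → ℝ)
    (F : Fin q → Set (EuclideanSpace ℝ (Fin md)))
    (hF : ∀ j, F j = closure (A j) ∩ {z | ∀ ℓ < ng j, g j ℓ z ≤ 0})
    (zstar : Fin q → EuclideanSpace ℝ (Fin md))
    (hzstar : ∀ j, (F j).Nonempty → zstar j ∈ F j ∧ ∀ z ∈ F j, qhat (zstar j) ≤ qhat z)
    (jb : Fin q) (hjb : (F jb).Nonempty)
    (hjbbest : ∀ j, (F j).Nonempty → qhat (zstar jb) ≤ qhat (zstar j)) :
    zstar jb ∈ Ω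
    ∧ (∃ ja : Fin q, zstar jb ∈ A ja
        ∧ zstar jb ∈ F ja ∧ ∀ z ∈ F ja, qhat (zstar jb) ≤ qhat z)
    ∧ (∀ xbar : EuclideanSpace ℝ (Fin md),
        qhat xbar ≤ 0 → (∃ j, xbar ∈ F j) → qhat (zstar jb) ≤ 0) := by
  obtain ⟨hmem, _⟩ := hzstar jb hjb
  rw [hF jb] at hmem
  have hΩ : zstar jb ∈ Ω := hA5 jb _ hmem.1 hmem.2
  obtain ⟨_, ⟨ja, rfl⟩, hja⟩ := hcover hΩ
  have hcon : zstar jb ∈ {z ∈ A ja | ∀ ℓ < ng ja, g ja ℓ z ≤ 0} := by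
    rw [← hconstitutive ja]; exact ⟨hΩ, hja⟩
  have hFja : zstar jb ∈ F ja := by
    rw [hF ja]; exact ⟨subset_closure hja, hcon.2⟩
  refine ⟨hΩ, ⟨ja, hja, hFja, fun z hz => ?_⟩, fun xbar hx ⟨j, hj⟩ => ?_⟩
  · exact le_trans (hjbbest ja ⟨_, hFja⟩) ((hzstar ja ⟨_, hFja⟩).2 z hz)
  · exact le_trans (le_trans (hjbbest j ⟨_, hj⟩) ((hzstar j ⟨_, hj⟩).2 xbar hj)) hx
end
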